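/- arXiv:2004.11240 — 3 statements merged into one kernel-verified Lean document; each statement's English description precedes it below -/
import Mathlib

section
/- The max-Tucker rank is not strongly proper: the tensor X ∈ T(3,2,2) whose mode-1 unfolding X_(1) is the 3×4 matrix [I₃, e] (the 3×3 identity matrix adjoined with the all-ones column vector e ∈ ℝ³) satisfies r_max(X) = 3 > 2 = submax{3,2,2}. -/
/-- A real tensor of arbitrary order and dimensions. -/
structure Tensor where
  order : ℕ
  dim : Fin order → ℕ
  entries : ((i : Fin order) → Fin (dim i)) → ℝ

namespace Tensor

/-- `X` is the zero tensor. -/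
def IsZero (X : Tensor) : Prop := ∀ idx, X.entries idx = 0

/-- `X` is a rank-one tensor: an outer product of nonzero vectors. -/
def IsRankOne (X : Tensor) : Prop :=
  ∃ x : (i : Fin X.order) → (Fin (X.dim i) → ℝ),
    (∀ i, x i ≠ 0) ∧ ∀ idx, X.entries idx = ∏ i, x i (idx i)

/-- The identity tensor `I_{m,n}`: entries are 1 on the diagonal, 0 off it. -/
def idTensor (m n : ℕ) : Tensor :=
  ⟨m, fun _ => n, fun idx => if ∀ i j, idx i = idx j then 1 else 0⟩

/-- Scalar multiple of a tensor. -/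
def smul (α : ℝ) (X : Tensor) : Tensor :=
  ⟨X.order, X.dim, fun idx => α * X.entries idx⟩

/-- The restriction of `X` to the index sets given by the maps `e i`. -/
def restrict (X : Tensor) (k : Fin X.order → ℕ)
    (e : (i : Fin X.order) → Fin (k i) → Fin (X.dim i)) : Tensor :=
  ⟨X.order, k, fun idx => X.entries fun i => e i (idx i)⟩

/-- `Y` is a subtensor of `X`: a restriction of `X` to nonempty index sets
(given by strictly monotone enumerations `e i`) in each mode. -/
def IsSubtensor (Y X : Tensor) : Prop :=
  ∃ (k : Fin X.order → ℕ) (e : (i : Fin X.order) → Fin (k i) → Fin (X.dim i)),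
    (∀ i, 0 < k i) ∧ (∀ i, StrictMono (e i)) ∧ Y = X.restrict k e

/-- The tensor obtained from `X` by permuting its modes by `σ`. -/
def permute (X : Tensor) (σ : Equiv.Perm (Fin X.order)) : Tensor :=
  ⟨X.order, fun i => X.dim (σ i), fun idx =>
    X.entries fun i => Fin.cast (congrArg X.dim (σ.apply_symm_apply i)) (idx (σ.symm i))⟩

/-- The mode-`j` unfolding of `X`, an `n_j × ∏_{i ≠ j} n_i` matrix. -/
def unfold (X : Tensor) (j : Fin X.order) :
    Matrix (Fin (X.dim j)) ((i : {i : Fin X.order // i ≠ j}) → Fin (X.dim i.1)) ℝ :=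
  fun a b => X.entries fun i =>
    if h : i = j then Fin.cast (congrArg X.dim h.symm) a else b ⟨i, h⟩

/-- `r_j(X)`: the rank of the mode-`j` unfolding of `X`. -/
noncomputable def modeRank (X : Tensor) (j : Fin X.order) : ℕ := (X.unfold j).rank

/-- The second largest value (with multiplicity) of `f 1, …, f m` (0 if `m < 2`). -/
def submax {m : ℕ} (f : Fin m → ℕ) : ℕ :=
  Finset.univ.sup fun p : Fin m × Fin m => if p.1 ≠ p.2 then min (f p.1) (f p.2) else 0

/-- The max-Tucker rank: the largest of the mode unfolding ranks. -/
noncomputable def rmax (X : Tensor) : ℕ := Finset.univ.sup fun j => X.modeRank j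

/-- The submax-Tucker rank: the second largest of the mode unfolding ranks. -/
noncomputable def rsub (X : Tensor) : ℕ := submax fun j => X.modeRank j

/-- `r` is a tensor rank function: Properties (P1)–(P6). -/
structure IsRankFun (r : Tensor → ℕ) : Prop where
  /-- (P1a) `r X = 0` iff `X` is the zero tensor. -/
  zero_iff : ∀ X, r X = 0 ↔ X.IsZero
  /-- (P1b) `r X = 1` iff `X` is a rank-one tensor. -/
  one_iff : ∀ X, r X = 1 ↔ X.IsRankOne
  /-- (P2) `r (I_{m,n}) = n` for `m ≥ 2`, `n ≥ 1`. -/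
  id_rank : ∀ m n : ℕ, 2 ≤ m → 1 ≤ n → r (idTensor m n) = n
  /-- (P3) on tensors in `T(n₁, n₂, 1, …, 1)`, `r` is the rank of the
  corresponding `n₁ × n₂` matrix. -/
  matrix_rank : ∀ (X : Tensor) (h2 : 2 ≤ X.order),
    (∀ i : Fin X.order, 2 ≤ (i : ℕ) → X.dim i = 1) →
    r X = X.modeRank ⟨0, by omega⟩
  /-- (P4) invariance under multiplication by a nonzero scalar. -/
  smul_invariant : ∀ α : ℝ, α ≠ 0 → ∀ X, r (smul α X) = r X
  /-- (P5) invariance under permutation of the modes. -/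
  perm_invariant : ∀ (X : Tensor) (σ : Equiv.Perm (Fin X.order)), r (X.permute σ) = r X
  /-- (P6) monotonicity with respect to subtensors. -/
  subtensor_le : ∀ X Y : Tensor, IsSubtensor Y X → r Y ≤ r X

/-- `r` is proper: `r X ≤ n` on cubic tensors in `T(n, …, n)`. -/
def IsProper (r : Tensor → ℕ) : Prop :=
  ∀ (X : Tensor) (n : ℕ), 0 < X.order → 0 < n → (∀ i, X.dim i = n) → r X ≤ n

/-- `r` is strongly proper: `r X ≤ submax {n₁, …, n_m}` whenever `m ≥ 2`. -/
def IsStronglyProper (r : Tensor → ℕ) : Prop :=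
  ∀ X : Tensor, 2 ≤ X.order → r X ≤ submax X.dim

/-- `X` is of full `r` rank: it is zero, or `r X` equals one of its dimensions. -/
def IsFullRank (r : Tensor → ℕ) (X : Tensor) : Prop :=
  X.IsZero ∨ ∃ p : Fin X.order, r X = X.dim p

/-- `Y` is a maximum full rank subtensor of `X` under `r`. -/
def IsMaxFullRankSubtensor (r : Tensor → ℕ) (X Y : Tensor) : Prop :=
  IsSubtensor Y X ∧ IsFullRank r Y ∧
    ∀ Z : Tensor, IsSubtensor Z X → IsFullRank r Z → r Z ≤ r Y

/-- `r` has the max-full-rank-subtensor property. -/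
def HasMaxFullRankSubtensorProperty (r : Tensor → ℕ) : Prop :=
  ∀ X Y : Tensor, IsMaxFullRankSubtensor r X Y → r X = r Y

/-- The closure of a (proper) tensor rank function `r`. -/
noncomputable def closure (r : Tensor → ℕ) (X : Tensor) : ℕ :=
  sSup {k | ∃ Y : Tensor, IsSubtensor Y X ∧ IsFullRank r Y ∧ r Y = k}

/-- The smallest tensor rank function `r₊`. -/
noncomputable def rStar (X : Tensor) : ℕ :=
  sInf {k | ∃ r : Tensor → ℕ, IsRankFun r ∧ r X = k}

/-- The CP rank: the least number of rank-one tensors summing to `X`. -/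
noncomputable def rCP (X : Tensor) : ℕ :=
  sInf {r | ∃ a : Fin r → (i : Fin X.order) → (Fin (X.dim i) → ℝ),
    (∀ p i, a p i ≠ 0) ∧ ∀ idx, X.entries idx = ∑ p, ∏ i, a p i (idx i)}

end Tensor
open Tensor in
/-- The tensor `X ∈ T(3,2,2)` whose mode-1 unfolding is `[I₃, e]`:
columns of the unfolding are indexed by `(j,k)` via `c = 2j + k`;
columns `0,1,2` are the standard basis vectors of `ℝ³` and column `3` is
the all-ones vector. -/
noncomputable def X9 : Tensor :=
  ⟨3, ![3, 2, 2], fun idx =>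
    if 2 * (idx 1 : ℕ) + (idx 2 : ℕ) < 3 then
      (if (idx 0 : ℕ) = 2 * (idx 1 : ℕ) + (idx 2 : ℕ) then 1 else 0)
    else 1⟩

theorem Matrix.card_le_rank_of_submatrix_eq_one {k m n R : Type*} [Fintype k] [DecidableEq k]
    [Fintype n] [CommSemiring R] [StrongRankCondition R] (A : Matrix m n R) (r : k → m)
    (c : k → n) (h : A.submatrix r c = 1) : Fintype.card k ≤ A.rank := by
  simpa [h, Matrix.rank_one] using A.rank_submatrix_le r c

namespace Tensor

theorem modeRank_le_dim (X : Tensor) (j : Fin X.order) : X.modeRank j ≤ X.dim j :=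
  (X.unfold j).rank_le_card_height.trans_eq (Fintype.card_fin _)

theorem modeRank_le_rmax (X : Tensor) (j : Fin X.order) : X.modeRank j ≤ rmax X :=
  Finset.le_sup (f := X.modeRank) (Finset.mem_univ j)

theorem rmax_le_of_forall_dim_le (X : Tensor) {n : ℕ} (h : ∀ j, X.dim j ≤ n) : rmax X ≤ n :=
  Finset.sup_le fun j _ => (X.modeRank_le_dim j).trans (h j)

end Tensor

open Tensor

theorem X9_dim : X9.dim = ![3, 2, 2] := rfl

theorem two_le_X9_dim (i : Fin X9.order) : 2 ≤ X9.dim i := by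
  rw [X9_dim]; fin_cases i <;> decide

def X9.firstMode : Fin X9.order := ⟨0, by decide⟩

noncomputable def X9.identityColumn (c : Fin 3) :
    (i : {i : Fin X9.order // i ≠ X9.firstMode}) → Fin (X9.dim i.1) := fun i =>
  Fin.castLE (two_le_X9_dim i.1) (if (i.1 : ℕ) = 1 then ⟨c / 2, by omega⟩ else ⟨c % 2, by omega⟩)

theorem X9_unfold_submatrix_identityColumn :
    (X9.unfold X9.firstMode).submatrix (Fin.cast rfl) X9.identityColumn =
      (1 : Matrix (Fin 3) (Fin 3) ℝ) := by
  ext a c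
  fin_cases a <;> fin_cases c <;> rfl

theorem X9_modeRank_firstMode : X9.modeRank X9.firstMode = 3 :=
  le_antisymm (X9.modeRank_le_dim _)
    ((X9.unfold _).card_le_rank_of_submatrix_eq_one (k := Fin 3) _ _
      X9_unfold_submatrix_identityColumn)

theorem rmax_X9 : rmax X9 = 3 :=
  le_antisymm (X9.rmax_le_of_forall_dim_le fun j => by rw [X9_dim]; fin_cases j <;> decide)
    (X9_modeRank_firstMode ▸ X9.modeRank_le_rmax _)

theorem submax_X9_dim : submax X9.dim = 2 := by
  rw [X9_dim]; decide

open Tensor in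
/-- the max-Tucker rank is not strongly proper, witnessed by the
tensor `X9 ∈ T(3,2,2)` with mode-1 unfolding `[I₃, e]`, which satisfies
`r_max X9 = 3 > 2 = submax {3,2,2}`. -/
theorem rmax_not_stronglyProper :
    rmax X9 = 3 ∧ submax X9.dim = 2 ∧ ¬ IsStronglyProper rmax := by
  refine ⟨rmax_X9, submax_X9_dim, fun h => ?_⟩
  have := h X9 (by decide)
  rw [rmax_X9, submax_X9_dim] at this
  omega
end

section
/- Let n₁, n₂, n₃ ∈ ℕ and let Y, Z ∈ T(2n₁, 2n₂, 2n₃) be such that y_{ijk} = 0 unless i ≤ n₁, j ≤ n₂ and k ≤ n₃, and z_{ijk} = 0 unless i > n₁, j > n₂ and k > n₃. Suppose the mode unfolding ranks of Y are (r₁, r₂, r₃) with r₁ > r₂ > r₃ and those of Z are (R₁, R₂, R₃) with R₂ > R₁ > R₃. Then r_sub(Y + Z) > r₂ + R₁ = r_sub(Y) + r_sub(Z); in particular, the submax-Tucker rank is not subadditive. -/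
/-- The mode-`j` unfolding rank of a third order tensor, with shape data
given explicitly (so that mode indices can be written as numerals). -/
noncomputable def modeRank3 (d : Fin 3 → ℕ)
    (f : ((i : Fin 3) → Fin (d i)) → ℝ) (j : Fin 3) : ℕ :=
  Tensor.modeRank ⟨3, d, f⟩ j

/-!
For every mode `j`, the mode-`j` unfolding of `Y` is supported on the rows `i_j < n_j` and on the
columns whose remaining indices are all small, that of `Z` on the complementary rows and columns.
Such block-diagonal sums have additive matrix rank, so `r_j(Y + Z) ≥ r_j(Y) + r_j(Z)`. Hence the
two mode ranks `r₁(Y + Z) ≥ r₁ + R₁` and `r₂(Y + Z) ≥ r₂ + R₂` both exceed `r₂ + R₁`, and so does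
the second largest one, while `r_sub(Y) = r₂` and `r_sub(Z) = R₁`.
-/

namespace Matrix

theorem rank_add_rank_le_rank_add_of_disjoint_blocks {m n K : Type*} [Fintype n] [Field K]
    {A B : Matrix m n K} (P : m → Prop) (Q : n → Prop)
    (hA : ∀ i j, A i j ≠ 0 → P i ∧ Q j) (hB : ∀ i j, B i j ≠ 0 → ¬P i ∧ ¬Q j) :
    A.rank + B.rank ≤ (A + B).rank := by
  classical
  have hA_row (i j) (hP : ¬P i) : A i j = 0 := by_contra fun h => hP (hA i j h).1
  have hA_col (i j) (hQ : ¬Q j) : A i j = 0 := by_contra fun h => hQ (hA i j h).2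
  have hB_row (i j) (hP : P i) : B i j = 0 := by_contra fun h => (hB i j h).1 hP
  have hB_col (i j) (hQ : Q j) : B i j = 0 := by_contra fun h => (hB i j h).2 hQ
  -- Since the column supports are disjoint, `A` and `B` are `A + B` with columns masked out.
  have hA_eq : A = (A + B) * diagonal fun j => if Q j then (1 : K) else 0 := by
    ext i j
    by_cases hQ : Q j <;> simp [hQ, hA_col, hB_col]
  have hB_eq : B = (A + B) * diagonal fun j => if Q j then (0 : K) else 1 := by
    ext i j
    by_cases hQ : Q j <;> simp [hQ, hA_col, hB_col]
  have range_le {C : Matrix m n K} (D : Matrix n n K) (h : C = (A + B) * D) :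
      LinearMap.range C.mulVecLin ≤ LinearMap.range (A + B).mulVecLin := by
    rw [h, mulVecLin_mul]
    exact LinearMap.range_comp_le_range _ _
  have mulVec_apply_eq_zero {C : Matrix m n K} {i : m} (h : ∀ j, C i j = 0) (x : n → K) :
      (C *ᵥ x) i = 0 := by
    simp [mulVec, dotProduct, h]
  -- Since the row supports are disjoint, so are the column spaces.
  have hdisj : Disjoint (LinearMap.range A.mulVecLin) (LinearMap.range B.mulVecLin) := by
    rw [Submodule.disjoint_def]
    rintro _ ⟨x, rfl⟩ ⟨y, hy⟩
    funext i
    by_cases hP : P i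
    · rw [Pi.zero_apply, ← hy]
      exact mulVec_apply_eq_zero (hB_row i · hP) y
    · exact mulVec_apply_eq_zero (hA_row i · hP) x
  have hdim := Submodule.finrank_sup_add_finrank_inf_eq
    (LinearMap.range A.mulVecLin) (LinearMap.range B.mulVecLin)
  rw [hdisj.eq_bot, finrank_bot, add_zero] at hdim
  rw [rank, rank, ← hdim]
  exact Submodule.finrank_mono (sup_le (range_le _ hA_eq) (range_le _ hB_eq))

end Matrix

namespace Tensor

theorem submax_three (a b c : ℕ) :
    submax ![a, b, c] = max (min a b) (max (min a c) (min b c)) := by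
  rw [submax, ← Finset.univ_product_univ, Finset.sup_product_left]
  simp [Fin.univ_succ]
  omega

theorem rsub_mk_three (d : Fin 3 → ℕ) (F : ((i : Fin 3) → Fin (d i)) → ℝ) :
    rsub ⟨3, d, F⟩ = max (min (modeRank3 d F 0) (modeRank3 d F 1))
      (max (min (modeRank3 d F 0) (modeRank3 d F 2))
        (min (modeRank3 d F 1) (modeRank3 d F 2))) := by
  rw [← submax_three, rsub]
  congr 1
  funext j
  fin_cases j <;> rfl

theorem modeRank_add_modeRank_le_of_corner_support {m : ℕ} [Nontrivial (Fin m)]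
    (d c : Fin m → ℕ) {F G : ((i : Fin m) → Fin (d i)) → ℝ}
    (hF : ∀ idx, F idx ≠ 0 → ∀ i, (idx i : ℕ) < c i)
    (hG : ∀ idx, G idx ≠ 0 → ∀ i, c i ≤ (idx i : ℕ)) (j : Fin m) :
    modeRank ⟨m, d, F⟩ j + modeRank ⟨m, d, G⟩ j ≤
      modeRank ⟨m, d, fun idx => F idx + G idx⟩ j := by
  refine Matrix.rank_add_rank_le_rank_add_of_disjoint_blocks
    (A := unfold ⟨m, d, F⟩ j) (B := unfold ⟨m, d, G⟩ j)
    (fun a => (a : ℕ) < c j) (fun b => ∀ i (hi : i ≠ j), (b ⟨i, hi⟩ : ℕ) < c i) ?_ ?_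
  · intro a b hab
    have hlt := hF _ hab
    exact ⟨by simpa using hlt j, fun i hi => by simpa [hi] using hlt i⟩
  · intro a b hab
    have hle := hG _ hab
    obtain ⟨i, hi⟩ := exists_ne j
    exact ⟨not_lt.2 (by simpa using hle j),
      fun hb => (hb i hi).not_ge (by simpa [hi] using hle i)⟩

end Tensor

open Tensor in
/-- for `Y, Z ∈ T(2n₁, 2n₂, 2n₃)` supported on complementary
"corner" blocks, with mode unfolding ranks `(r₁, r₂, r₃)`, `r₁ > r₂ > r₃`, and
`(R₁, R₂, R₃)`, `R₂ > R₁ > R₃`, one has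
`r_sub (Y + Z) > r₂ + R₁ = r_sub Y + r_sub Z`; in particular the submax-Tucker
rank is not subadditive. -/
theorem rsub_not_subadditive (n₁ n₂ n₃ : ℕ)
    (f g : ((i : Fin 3) → Fin ((![2 * n₁, 2 * n₂, 2 * n₃] : Fin 3 → ℕ) i)) → ℝ)
    (hf : ∀ idx, ¬ ((idx 0 : ℕ) < n₁ ∧ (idx 1 : ℕ) < n₂ ∧ (idx 2 : ℕ) < n₃) →
      f idx = 0)
    (hg : ∀ idx, ¬ (n₁ ≤ (idx 0 : ℕ) ∧ n₂ ≤ (idx 1 : ℕ) ∧ n₃ ≤ (idx 2 : ℕ)) →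
      g idx = 0)
    (r₁ r₂ r₃ R₁ R₂ R₃ : ℕ)
    (hY : modeRank3 _ f 0 = r₁ ∧ modeRank3 _ f 1 = r₂ ∧ modeRank3 _ f 2 = r₃)
    (hZ : modeRank3 _ g 0 = R₁ ∧ modeRank3 _ g 1 = R₂ ∧ modeRank3 _ g 2 = R₃)
    (hr : r₃ < r₂ ∧ r₂ < r₁) (hR : R₃ < R₁ ∧ R₁ < R₂) :
    rsub ⟨3, ![2 * n₁, 2 * n₂, 2 * n₃], fun idx => f idx + g idx⟩ > r₂ + R₁ ∧
    r₂ + R₁ = rsub ⟨3, ![2 * n₁, 2 * n₂, 2 * n₃], f⟩ +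
      rsub ⟨3, ![2 * n₁, 2 * n₂, 2 * n₃], g⟩ ∧
    ¬ (∀ (m : ℕ) (n : Fin m → ℕ) (F G : ((i : Fin m) → Fin (n i)) → ℝ),
        rsub ⟨m, n, fun idx => F idx + G idx⟩ ≤
          rsub ⟨m, n, F⟩ + rsub ⟨m, n, G⟩) := by
  obtain ⟨hY₁, hY₂, hY₃⟩ := hY
  obtain ⟨hZ₁, hZ₂, hZ₃⟩ := hZ
  have hF : ∀ idx, f idx ≠ 0 → ∀ i, (idx i : ℕ) < ![n₁, n₂, n₃] i := fun idx h => by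
    simpa [Fin.forall_fin_succ] using not_imp_comm.1 (hf idx) h
  have hG : ∀ idx, g idx ≠ 0 → ∀ i, ![n₁, n₂, n₃] i ≤ (idx i : ℕ) := fun idx h => by
    simpa [Fin.forall_fin_succ] using not_imp_comm.1 (hg idx) h
  have hsum (j : Fin 3) : modeRank3 _ f j + modeRank3 _ g j ≤
      modeRank3 _ (fun idx => f idx + g idx) j :=
    modeRank_add_modeRank_le_of_corner_support _ _ hF hG j
  have hrY : rsub ⟨3, ![2 * n₁, 2 * n₂, 2 * n₃], f⟩ = r₂ := by
    rw [rsub_mk_three, hY₁, hY₂, hY₃]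
    omega
  have hrZ : rsub ⟨3, ![2 * n₁, 2 * n₂, 2 * n₃], g⟩ = R₁ := by
    rw [rsub_mk_three, hZ₁, hZ₂, hZ₃]
    omega
  have hrYZ : r₂ + R₁ < rsub ⟨3, ![2 * n₁, 2 * n₂, 2 * n₃], fun idx => f idx + g idx⟩ := by
    have h₀ := hsum 0
    have h₁ := hsum 1
    rw [hY₁, hZ₁] at h₀
    rw [hY₂, hZ₂] at h₁
    rw [rsub_mk_three]
    omega
  refine ⟨hrYZ, by rw [hrY, hrZ], fun H => ?_⟩
  have := H 3 _ f g
  omega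
end

section
/- The max-Tucker rank function r_max has the max-full-rank-subtensor property: for every X ∈ T and every maximum full rank subtensor Y of X under r_max, r_max(X) = r_max(Y). -/
/-!
Passing to a subtensor turns every unfolding into a submatrix, so `rmax` is monotone on
subtensors and `rmax Y ≤ rmax X`. Conversely, if `rmax X = r_j(X) = K > 0`, keep in mode `j`
only `K` linearly independent rows of `X_(j)`: the resulting subtensor has `n_j = K = r_j`, so
it is of full `rmax` rank with `rmax = rmax X`, and the maximality of `Y` gives
`rmax X ≤ rmax Y`.
-/

theorem Matrix.exists_orderEmbedding_rank_submatrix_eq_rank {K c : Type*} [Field K] [Fintype c]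
    {n : ℕ} (A : Matrix (Fin n) c K) :
    ∃ f : Fin A.rank ↪o Fin n, (A.submatrix f id).rank = A.rank := by
  classical
  obtain ⟨b, -, -, hspan, hli⟩ :=
    exists_linearIndepOn_extension (linearIndepOn_empty K A.row) (Set.empty_subset Set.univ)
  have hcard : b.toFinset.card = A.rank := by
    have hspan_eq : Submodule.span K (Set.range fun i : b => A.row i) =
        Submodule.span K (Set.range A.row) := by
      refine le_antisymm (Submodule.span_mono (Set.range_comp_subset_range _ _)) ?_
      rw [Submodule.span_le, ← Set.image_univ, Set.range_comp', Subtype.range_coe]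
      exact hspan
    rw [A.rank_eq_finrank_span_row, ← hspan_eq, finrank_span_eq_card hli.linearIndependent,
      Set.toFinset_card]
  set f := b.toFinset.orderEmbOfFin hcard
  have hmem (i : Fin A.rank) : f i ∈ b :=
    Set.mem_toFinset.mp (b.toFinset.orderEmbOfFin_mem hcard i)
  have hrows : LinearIndependent K (A.submatrix f id).row :=
    hli.linearIndependent.comp (fun i => ⟨f i, hmem i⟩) fun i i' h =>
      f.injective (congrArg Subtype.val h :)
  exact ⟨f, by rw [hrows.rank_matrix, Fintype.card_fin]⟩

namespace Tensor

theorem unfold_restrict (X : Tensor) (k : Fin X.order → ℕ)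
    (e : (i : Fin X.order) → Fin (k i) → Fin (X.dim i)) (j : Fin X.order) :
    (X.restrict k e).unfold j = (X.unfold j).submatrix (e j) fun b i => e i.1 (b i) := by
  ext a b
  simp only [unfold, restrict]
  congr 1
  funext i
  by_cases h : i = j
  · subst h
    simp only [↓reduceDIte, Fin.cast_eq_self]
    rfl
  · simp [h]

theorem modeRank_restrict (X : Tensor) (k : Fin X.order → ℕ)
    (e : (i : Fin X.order) → Fin (k i) → Fin (X.dim i)) (j : Fin X.order) :
    (X.restrict k e).modeRank j =
      ((X.unfold j).submatrix (e j) fun (b : (i : {i // i ≠ j}) → Fin (k i)) i =>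
        e i.1 (b i)).rank :=
  -- The ascription makes `Matrix.rank` use the `Fintype` instances of the `X`-side index types:
  -- synthesizing them for `X.restrict k e`, whose order is only definitionally `X.order`, fails.
  congrArg (fun M : Matrix (Fin (k j)) ((i : {i // i ≠ j}) → Fin (k i)) ℝ => M.rank)
    (unfold_restrict X k e j)

theorem modeRank_restrict_le (X : Tensor) (k : Fin X.order → ℕ)
    (e : (i : Fin X.order) → Fin (k i) → Fin (X.dim i)) (j : Fin X.order) :
    (X.restrict k e).modeRank j ≤ X.modeRank j := by
  rw [modeRank_restrict]
  exact Matrix.rank_submatrix_le _ _ _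

theorem rmax_le_of_isSubtensor {X Y : Tensor} (h : IsSubtensor Y X) : rmax Y ≤ rmax X := by
  obtain ⟨k, e, -, -, rfl⟩ := h
  exact Finset.sup_le fun j _ => (modeRank_restrict_le X k e j).trans (modeRank_le_rmax X j)

theorem exists_modeRank_eq_rmax {X : Tensor} (h : 0 < rmax X) : ∃ j, X.modeRank j = rmax X := by
  obtain ⟨j, -, -⟩ := Finset.lt_sup_iff.mp h
  obtain ⟨j, -, hj⟩ := Finset.exists_mem_eq_sup _ ⟨j, Finset.mem_univ j⟩ X.modeRank
  exact ⟨j, hj.symm⟩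

theorem dim_pos_of_modeRank_pos {X : Tensor} {j : Fin X.order} (h : 0 < X.modeRank j)
    (i : Fin X.order) : 0 < X.dim i := by
  have hne : X.unfold j ≠ 0 := fun h0 => by simp [modeRank, h0] at h
  obtain ⟨a, b, -⟩ : ∃ a b, X.unfold j a b ≠ 0 := by
    by_contra! h0
    exact hne (Matrix.ext h0)
  by_cases hij : i = j
  · subst hij
    exact a.pos
  · exact (b ⟨i, hij⟩).pos

def restrictModeEmb (X : Tensor) (j : Fin X.order) {K : ℕ} (f : Fin K ↪o Fin (X.dim j))
    (i : Fin X.order) : Fin (Function.update X.dim j K i) → Fin (X.dim i) :=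
  if h : i = j then fun a => Fin.cast (congrArg X.dim h.symm) (f (Fin.cast (by simp [h]) a))
  else Fin.cast (by simp [h])

theorem restrictModeEmb_self (X : Tensor) (j : Fin X.order) {K : ℕ} (f : Fin K ↪o Fin (X.dim j))
    (a : Fin (Function.update X.dim j K j)) :
    restrictModeEmb X j f j a = f (Fin.cast (Function.update_self j K X.dim) a) := by
  simp [restrictModeEmb]

theorem restrictModeEmb_of_ne (X : Tensor) {i j : Fin X.order} (h : i ≠ j) {K : ℕ}
    (f : Fin K ↪o Fin (X.dim j)) (a : Fin (Function.update X.dim j K i)) :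
    restrictModeEmb X j f i a = Fin.cast (Function.update_of_ne h K X.dim) a := by
  simp [restrictModeEmb, h]

theorem strictMono_restrictModeEmb (X : Tensor) (j : Fin X.order) {K : ℕ}
    (f : Fin K ↪o Fin (X.dim j)) (i : Fin X.order) : StrictMono (restrictModeEmb X j f i) := by
  by_cases h : i = j
  · subst h
    intro a b hab
    simpa [restrictModeEmb_self] using hab
  · intro a b hab
    simpa [restrictModeEmb_of_ne X h] using hab

def restrictMode (X : Tensor) (j : Fin X.order) {K : ℕ} (f : Fin K ↪o Fin (X.dim j)) : Tensor :=
  X.restrict (Function.update X.dim j K) (restrictModeEmb X j f)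

theorem isSubtensor_restrictMode (X : Tensor) (j : Fin X.order) {K : ℕ}
    (f : Fin K ↪o Fin (X.dim j)) (hK : 0 < K) (hdim : ∀ i, 0 < X.dim i) :
    IsSubtensor (X.restrictMode j f) X := by
  refine ⟨_, _, fun i => ?_, strictMono_restrictModeEmb X j f, rfl⟩
  by_cases h : i = j
  · subst h
    simpa using hK
  · simpa [h] using hdim i

theorem modeRank_restrictMode (X : Tensor) (j : Fin X.order) {K : ℕ}
    (f : Fin K ↪o Fin (X.dim j)) :
    (X.restrictMode j f).modeRank j = ((X.unfold j).submatrix f id).rank := by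
  refine (modeRank_restrict X _ _ j).trans ?_
  have hsub : ((X.unfold j).submatrix (restrictModeEmb X j f j) fun b i =>
      restrictModeEmb X j f i (b i)) =
    ((X.unfold j).submatrix f id).submatrix (finCongr (Function.update_self j K X.dim))
      (Equiv.piCongrRight fun i => finCongr (Function.update_of_ne i.2 K X.dim)) := by
    ext a b
    simp only [Matrix.submatrix_apply, restrictModeEmb_self]
    congr
    funext i
    exact restrictModeEmb_of_ne X i.2 f (b i)
  rw [hsub, Matrix.rank_submatrix]

theorem exists_isSubtensor_isFullRank_rmax_eq {X : Tensor} (hX : 0 < rmax X) :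
    ∃ Z, IsSubtensor Z X ∧ IsFullRank rmax Z ∧ rmax Z = rmax X := by
  obtain ⟨j, hj⟩ := exists_modeRank_eq_rmax hX
  obtain ⟨f, hf⟩ := (X.unfold j).exists_orderEmbedding_rank_submatrix_eq_rank
  have hjpos : 0 < X.modeRank j := hj ▸ hX
  have hsub : IsSubtensor (X.restrictMode j f) X :=
    isSubtensor_restrictMode X j f hjpos (dim_pos_of_modeRank_pos hjpos)
  have hmode : (X.restrictMode j f).modeRank j = rmax X :=
    (modeRank_restrictMode X j f).trans (hf.trans hj)
  have hrmax : rmax (X.restrictMode j f) = rmax X :=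
    le_antisymm (rmax_le_of_isSubtensor hsub)
      (hmode.symm.trans_le (modeRank_le_rmax (X.restrictMode j f) j))
  refine ⟨_, hsub, Or.inr ⟨j, ?_⟩, hrmax⟩
  rw [hrmax, ← hj]
  exact (Function.update_self j _ X.dim).symm

end Tensor

open Tensor in
/-- the max-Tucker rank has the max-full-rank-subtensor
property. -/
theorem rmax_hasMaxFullRankSubtensorProperty :
    HasMaxFullRankSubtensorProperty rmax := by
  rintro X Y ⟨hYX, -, hmax⟩
  refine le_antisymm ?_ (rmax_le_of_isSubtensor hYX)
  rcases Nat.eq_zero_or_pos (rmax X) with h0 | hpos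
  · simp [h0]
  obtain ⟨Z, hZX, hZfull, hZ⟩ := exists_isSubtensor_isFullRank_rmax_eq hpos
  exact hZ ▸ hmax Z hZX hZfull
end
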